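/- arXiv:1511.08783 — 3 statements merged into one kernel-verified Lean document; each statement's English description precedes it below -/
import Mathlib

section
/- Let H be a weak Hopf algebra, A an algebra, and u ∈ Hom(H,A) an (e,f)-invertible element with f(H) ⊆ Z(A). Then h · (ab) = (h₁ · a)(h₂ · b) for all h ∈ H and a, b ∈ A, where h · a = u(h₁) a u⁻¹(h₂). -/
open TensorProduct LinearMap

noncomputable section

section Defs

variable (k : Type*) [CommRing k]

/-- Convolution product on `Hom(C, A)`: `(φ * ψ)(c) = φ(c₁) ψ(c₂)`. -/
def conv {C A : Type*} [AddCommMonoid C] [Module k C] [Coalgebra k C]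
    [Ring A] [Algebra k A] (φ ψ : C →ₗ[k] A) : C →ₗ[k] A :=
  LinearMap.mul' k A ∘ₗ TensorProduct.map φ ψ ∘ₗ Coalgebra.comul

variable (H : Type*) [Ring H] [Algebra k H] [Coalgebra k H]

/-- The target counital map `ε_t(h) = ε(1₁ h) 1₂`. -/
def epsT : H →ₗ[k] H :=
  (TensorProduct.lid k H).toLinearMap ∘ₗ TensorProduct.map Coalgebra.counit LinearMap.id
    ∘ₗ LinearMap.mulLeft k (Coalgebra.comul (R := k) (1 : H))
    ∘ₗ (TensorProduct.mk k H H).flip 1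

/-- The source counital map `ε_s(h) = 1₁ ε(h 1₂)`. -/
def epsS : H →ₗ[k] H :=
  (TensorProduct.rid k H).toLinearMap ∘ₗ TensorProduct.map LinearMap.id Coalgebra.counit
    ∘ₗ LinearMap.mulRight k (Coalgebra.comul (R := k) (1 : H))
    ∘ₗ TensorProduct.mk k H H 1

/-- The axioms making the algebra-and-coalgebra `H` a weak Hopf algebra with
antipode `S`. -/
structure IsWeakHopf (S : H →ₗ[k] H) : Prop where
  comul_mul : ∀ g h : H,
    Coalgebra.comul (R := k) (g * h) = Coalgebra.comul (R := k) g * Coalgebra.comul (R := k) h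
  comul_one_left :
    TensorProduct.map (Coalgebra.comul (R := k)) LinearMap.id (Coalgebra.comul (R := k) (1 : H)) =
      (Coalgebra.comul (R := k) (1 : H) ⊗ₜ (1 : H)) *
        ((TensorProduct.assoc k H H H).symm ((1 : H) ⊗ₜ Coalgebra.comul (R := k) (1 : H)))
  comul_one_right :
    TensorProduct.map (Coalgebra.comul (R := k)) LinearMap.id (Coalgebra.comul (R := k) (1 : H)) =
      ((TensorProduct.assoc k H H H).symm ((1 : H) ⊗ₜ Coalgebra.comul (R := k) (1 : H))) *
        (Coalgebra.comul (R := k) (1 : H) ⊗ₜ (1 : H))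
  counit_mul_left : ∀ h g l : H,
    Coalgebra.counit (R := k) (h * g * l) =
      conv k (Coalgebra.counit ∘ₗ LinearMap.mulLeft k h)
        (Coalgebra.counit ∘ₗ LinearMap.mulRight k l) g
  counit_mul_right : ∀ h g l : H,
    Coalgebra.counit (R := k) (h * g * l) =
      conv k (Coalgebra.counit ∘ₗ LinearMap.mulRight k l)
        (Coalgebra.counit ∘ₗ LinearMap.mulLeft k h) g
  conv_id_antipode : conv k LinearMap.id S = epsT k H
  conv_antipode_id : conv k S LinearMap.id = epsS k H
  conv_antipode_id_antipode : conv k (conv k S LinearMap.id) S = S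

/-- `smul3 u v a` is the linear map `h ↦ u(h₁) a v(h₂)` (Sweedler notation). -/
def smul3 {A : Type*} [Ring A] [Algebra k A] (u v : H →ₗ[k] A) (a : A) : H →ₗ[k] A :=
  TensorProduct.lift ((LinearMap.mul k A ∘ₗ LinearMap.mulRight k a ∘ₗ u).compl₂ v)
    ∘ₗ Coalgebra.comul

/-- The bilinear map `t(g, h) = v(h₁) v(g₁) u(g₂ h₂)`, as a linear map on `H ⊗ H`. -/
def tmap {A : Type*} [Ring A] [Algebra k A] (u v : H →ₗ[k] A) : H ⊗[k] H →ₗ[k] A :=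
  LinearMap.mul' k A ∘ₗ
    TensorProduct.map
      (LinearMap.mul' k A ∘ₗ TensorProduct.map v v ∘ₗ (TensorProduct.comm k H H).toLinearMap)
      (u ∘ₗ LinearMap.mul' k H) ∘ₗ
    (TensorProduct.tensorTensorTensorComm k H H H H).toLinearMap ∘ₗ
    TensorProduct.map Coalgebra.comul Coalgebra.comul

end Defs

/-! In the convolution algebra `Hom(H, A)` the action is a triple product,
`h · a = (u * aε * u⁻¹)(h)` with `aε := (x ↦ ε(x) a)`, and `a ↦ aε` is multiplicative.
Since `f = u⁻¹ * u` is a left unit for `u⁻¹` and commutes with every `bε` (its values are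
central), `u aε bε u⁻¹ = u aε bε f u⁻¹ = u aε f bε u⁻¹ = (u aε u⁻¹)(u bε u⁻¹)`. -/

open WithConv

theorem sandwich_mul_of_commute {M : Type*} [Monoid M] {u v f : M}
    (hvu : v * u = f) (hfv : f * v = v) (x : M) {y : M} (hy : Commute y f) :
    u * (x * y) * v = u * x * v * (u * y * v) := by
  calc u * (x * y) * v = u * x * (y * f) * v := by
        simp only [mul_assoc, hfv]
    _ = u * x * (f * y) * v := by rw [hy.eq]
    _ = u * x * v * (u * y * v) := by simp only [← hvu, mul_assoc]

section ConstConv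

variable {k C A : Type*} [CommSemiring k] [AddCommMonoid C] [Module k C] [Coalgebra k C]
  [Semiring A] [Algebra k A]

def constConv (c : A) : WithConv (C →ₗ[k] A) :=
  toConv (toSpanSingleton k A c ∘ₗ Coalgebra.counit)

theorem ofConv_constConv_mul (c : A) (φ : WithConv (C →ₗ[k] A)) :
    (constConv c * φ).ofConv = LinearMap.mulLeft k c ∘ₗ φ.ofConv := by
  ext x
  simp [constConv, ← map_comp_rTensor]

theorem ofConv_mul_constConv (φ : WithConv (C →ₗ[k] A)) (c : A) :
    (φ * constConv c).ofConv = LinearMap.mulRight k c ∘ₗ φ.ofConv := by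
  ext x
  simp [constConv, ← map_comp_lTensor]

theorem constConv_mul (a b : A) :
    constConv (k := k) (C := C) (a * b) = constConv a * constConv b := by
  ext x
  rw [ofConv_constConv_mul]
  simp [constConv]

theorem commute_constConv {φ : WithConv (C →ₗ[k] A)} (hφ : ∀ x, φ x ∈ Set.center A) (c : A) :
    Commute (constConv c) φ := by
  ext x
  simp only [ofConv_constConv_mul, ofConv_mul_constConv, comp_apply, mulLeft_apply,
    mulRight_apply]
  exact ((Set.mem_center_iff.mp (hφ x)).comm c).eq.symm

end ConstConv

section Smul3

variable {k H A : Type*} [CommRing k] [Ring H] [Algebra k H] [Coalgebra k H]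
  [Ring A] [Algebra k A]

theorem toConv_conv (φ ψ : H →ₗ[k] A) : toConv (conv k φ ψ) = toConv φ * toConv ψ := rfl

theorem toConv_smul3 (u v : H →ₗ[k] A) (a : A) :
    toConv (smul3 k H u v a) = toConv u * constConv a * toConv v := by
  have hlift : TensorProduct.lift ((LinearMap.mul k A ∘ₗ LinearMap.mulRight k a ∘ₗ u).compl₂ v) =
      LinearMap.mul' k A ∘ₗ TensorProduct.map (LinearMap.mulRight k a ∘ₗ u) v :=
    TensorProduct.ext' fun _ _ => rfl
  ext x
  rw [convMul_apply, ofConv_mul_constConv, smul3, comp_apply, hlift]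
  rfl

end Smul3

section Statement

variable (k : Type*) [Field k] (H : Type*) [Ring H] [Algebra k H] [Coalgebra k H]
  [FiniteDimensional k H] (A : Type*) [Ring A] [Algebra k A]

theorem smul_mul_of_f_central
    (f u v : H →ₗ[k] A)
    (hvu : conv k v u = f)
    (hfv : conv k f v = v)
    (hfcentral : ∀ h : H, f h ∈ Set.center A) :
    ∀ (h : H) (a b : A),
      smul3 k H u v (a * b) h = conv k (smul3 k H u v a) (smul3 k H u v b) h := by
  intro h a b
  have key : toConv (smul3 k H u v (a * b)) =
      toConv (conv k (smul3 k H u v a) (smul3 k H u v b)) := by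
    rw [toConv_conv, toConv_smul3, toConv_smul3, toConv_smul3, constConv_mul]
    exact sandwich_mul_of_commute (congrArg toConv hvu) (congrArg toConv hfv) _
      (commute_constConv hfcentral b)
  exact LinearMap.congr_fun (toConv_injective key) h

end Statement
end
end

section
/- Let H be a weak Hopf algebra and A a left H-module algebra. Suppose u ∈ Hom(H,A) is (e,f)-invertible such that e(h) = h · 1_A and u(h₁) a f(h₂) = u(h) a for all a ∈ A, h ∈ H. Then the action satisfies h · a = u(h₁) a u⁻¹(h₂) for all h, a if and only if (h₁ · a) u(h₂) = u(h) a for all h, a. -/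
/-!
Write `φ_a = (h ↦ h · a)` and `R_a` for right multiplication by `a`. Since `e = φ_1` is a right
unit for `φ_a` under convolution (this is the module-algebra axiom with `b = 1`), the two
conditions read `φ_a = (R_a ∘ u) * v` and `φ_a * u = R_a ∘ u`, and each follows from the other by
associativity of convolution: `u * v = e` gives one direction, `v * u = f` together with
`(R_a ∘ u) * f = R_a ∘ u` the other.
-/

open TensorProduct LinearMap

noncomputable section

section Convolution

variable {k : Type*} [CommRing k] {C A : Type*} [AddCommMonoid C] [Module k C] [Coalgebra k C]
  [Ring A] [Algebra k A]

lemma conv_eq_ofConv_mul (φ ψ : C →ₗ[k] A) :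
    conv k φ ψ = (WithConv.toConv φ * WithConv.toConv ψ).ofConv :=
  rfl

lemma conv_assoc (φ ψ χ : C →ₗ[k] A) :
    conv k (conv k φ ψ) χ = conv k φ (conv k ψ χ) := by
  simp only [conv_eq_ofConv_mul, WithConv.toConv_ofConv, mul_assoc]

lemma conv_flip_one_right {α : C →ₗ[k] A →ₗ[k] A}
    (hα_mulA : ∀ (h : C) (a b : A), α h (a * b) = conv k (α.flip a) (α.flip b) h) (a : A) :
    conv k (α.flip a) (α.flip 1) = α.flip a :=
  LinearMap.ext fun h => by rw [← hα_mulA, mul_one, flip_apply]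

end Convolution

lemma smul3_eq_conv {k : Type*} [CommRing k] {H : Type*} [Ring H] [Algebra k H] [Coalgebra k H]
    {A : Type*} [Ring A] [Algebra k A] (u v : H →ₗ[k] A) (a : A) :
    smul3 k H u v a = conv k (mulRight k a ∘ₗ u) v := by
  have hlift : TensorProduct.lift ((LinearMap.mul k A ∘ₗ mulRight k a ∘ₗ u).compl₂ v) =
      mul' k A ∘ₗ TensorProduct.map (mulRight k a ∘ₗ u) v :=
    TensorProduct.ext' fun x y => by simp
  rw [smul3, conv, hlift, comp_assoc]

section Statement

variable (k : Type*) [Field k] (H : Type*) [Ring H] [Algebra k H] [Coalgebra k H]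
  [FiniteDimensional k H] (A : Type*) [Ring A] [Algebra k A]

theorem inner_action_iff
    (α : H →ₗ[k] A →ₗ[k] A)
    -- `A` is a left `H`-module algebra:
    (hα_mulA : ∀ (h : H) (a b : A), α h (a * b) = conv k (α.flip a) (α.flip b) h)
    (e f u v : H →ₗ[k] A)
    (huv : conv k u v = e) (hvu : conv k v u = f)
    (hE : ∀ h : H, e h = α h 1)
    (hUF : ∀ (h : H) (a : A), smul3 k H u f a h = u h * a) :
    (∀ (h : H) (a : A), α h a = smul3 k H u v a h) ↔
      (∀ (h : H) (a : A), conv k (α.flip a) u h = u h * a) := by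
  constructor
  · intro hinner h a
    have hflip : α.flip a = conv k (mulRight k a ∘ₗ u) v :=
      LinearMap.ext fun g => by rw [flip_apply, hinner, smul3_eq_conv]
    calc conv k (α.flip a) u h = conv k (mulRight k a ∘ₗ u) f h := by
          rw [hflip, conv_assoc, hvu]
      _ = u h * a := by rw [← smul3_eq_conv, hUF]
  · intro hcov h a
    have hcov' : conv k (α.flip a) u = mulRight k a ∘ₗ u := LinearMap.ext fun g => hcov g a
    have he : e = α.flip 1 := LinearMap.ext hE
    calc α h a = conv k (α.flip a) (conv k u v) h := by
          rw [huv, he, conv_flip_one_right hα_mulA, flip_apply]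
      _ = smul3 k H u v a h := by rw [← conv_assoc, hcov', smul3_eq_conv]

end Statement
end
end

section
/- A weak Hopf algebra H is quantum commutative (i.e., h₁ g ε_s(h₂) = hg for all g, h ∈ H) if and only if the source counital subalgebra H_s is contained in the center of H. -/
/-! `H_s` is the image of the idempotent `ε_s`, and every `z ∈ H_s` satisfies
`Δ z = Δ 1 (1 ⊗ z)` and `ε_s (w z) = ε_s w · z`. Hence quantum commutativity at `h = z`
and at `h = 1` gives `z g = 1₁ g ε_s(1₂ z) = (1₁ g ε_s(1₂)) z = g z`. Conversely, if `H_s` is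
central then `h₁ g ε_s(h₂) = h₁ ε_s(h₂) g = h g`, since `h₁ ε_s(h₂) = h`. -/

open TensorProduct LinearMap

noncomputable section

section Slice

variable {k : Type*} [CommRing k]

def sliceRight {M N : Type*} [AddCommMonoid M] [Module k M] [AddCommMonoid N] [Module k N]
    (f : N →ₗ[k] k) : M ⊗[k] N →ₗ[k] M :=
  (TensorProduct.rid k M).toLinearMap ∘ₗ lTensor M f

section Modules

variable {M N P : Type*} [AddCommMonoid M] [Module k M] [AddCommMonoid N] [Module k N]
  [AddCommMonoid P] [Module k P]

@[simp]
lemma sliceRight_tmul (f : N →ₗ[k] k) (m : M) (n : N) :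
    sliceRight f (m ⊗ₜ[k] n) = f n • m := by
  simp [sliceRight]

lemma sliceRight_comp_rTensor (f : N →ₗ[k] k) (g : M →ₗ[k] P) :
    sliceRight f ∘ₗ rTensor N g = g ∘ₗ sliceRight f :=
  TensorProduct.ext' fun m n => by simp

lemma sliceRight_counit_comp_comul {C : Type*} [AddCommMonoid C] [Module k C] [Coalgebra k C] :
    sliceRight Coalgebra.counit ∘ₗ Coalgebra.comul (R := k) (A := C) = LinearMap.id := by
  ext c
  simp [sliceRight]

end Modules

variable {A : Type*} [Ring A] [Algebra k A]

lemma mul_sliceRight_mulLeft (f : A →ₗ[k] k) (a b : A) (t : A ⊗[k] A) :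
    a * sliceRight (f ∘ₗ mulLeft k b) t = sliceRight f ((a ⊗ₜ[k] b) * t) := by
  induction t with
  | zero => simp
  | tmul c d => simp [Algebra.TensorProduct.tmul_mul_tmul]
  | add x y hx hy => rw [map_add, mul_add, hx, hy, mul_add, map_add]

lemma sliceRight_mul_assoc_symm (f : A →ₗ[k] k) (t u : A ⊗[k] A) :
    sliceRight f
        ((t ⊗ₜ[k] (1 : A)) * (TensorProduct.assoc k A A A).symm ((1 : A) ⊗ₜ[k] u)) =
      t * ((1 : A) ⊗ₜ[k] sliceRight f u) := by
  induction u with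
  | zero => simp
  | tmul c d =>
    induction t with
    | zero => simp
    | tmul a b => simp [Algebra.TensorProduct.tmul_mul_tmul, TensorProduct.smul_tmul']
    | add x y hx hy => rw [TensorProduct.add_tmul, add_mul, map_add, hx, hy, add_mul]
  | add x y hx hy => simp only [TensorProduct.tmul_add, map_add, mul_add, hx, hy]

lemma rTensor_sliceRight_assoc_symm_mul (f : A →ₗ[k] k) (t : A ⊗[k] A) (c d : A) :
    rTensor A (sliceRight f)
        ((TensorProduct.assoc k A A A).symm ((1 : A) ⊗ₜ[k] (c ⊗ₜ[k] d)) *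
          (t ⊗ₜ[k] (1 : A))) =
      sliceRight (f ∘ₗ mulLeft k c) t ⊗ₜ[k] d := by
  induction t with
  | zero => simp
  | tmul a b => simp [Algebra.TensorProduct.tmul_mul_tmul]
  | add x y hx hy => rw [TensorProduct.add_tmul, mul_add, map_add, hx, hy, map_add,
      TensorProduct.add_tmul]

end Slice

section Smul3

variable {k : Type*} [CommRing k] {H : Type*} [Ring H] [Algebra k H] [Coalgebra k H]

lemma smul3_eq_mulRight_comp_conv {A : Type*} [Ring A] [Algebra k A] {u v : H →ₗ[k] A} {a : A}
    (hv : ∀ x, Commute (v x) a) : smul3 k H u v a = mulRight k a ∘ₗ conv k u v := by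
  have hlift : TensorProduct.lift ((LinearMap.mul k A ∘ₗ mulRight k a ∘ₗ u).compl₂ v) =
      mulRight k a ∘ₗ LinearMap.mul' k A ∘ₗ TensorProduct.map u v :=
    TensorProduct.ext' fun x y => by simp [mul_assoc, (hv y).eq]
  rw [smul3, hlift, conv]
  rfl

lemma smul3_apply_of_comul_eq {u v : H →ₗ[k] H} {a z : H} (hv : ∀ w, v (w * z) = v w * z)
    (hz : Coalgebra.comul (R := k) z = Coalgebra.comul (R := k) (1 : H) * ((1 : H) ⊗ₜ[k] z)) :
    smul3 k H u v a z = smul3 k H u v a 1 * z := by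
  simp only [smul3, comp_apply, hz]
  induction Coalgebra.comul (R := k) (1 : H) with
  | zero => simp
  | tmul c d => simp [Algebra.TensorProduct.tmul_mul_tmul, hv, mul_assoc]
  | add x y hx hy => rw [add_mul, map_add, map_add, hx, hy, add_mul]

end Smul3

section WeakHopf

variable {k : Type*} [CommRing k] {H : Type*} [Ring H] [Algebra k H] [Coalgebra k H]
  {S : H →ₗ[k] H}

lemma epsS_apply (h : H) :
    epsS k H h =
      sliceRight (Coalgebra.counit ∘ₗ mulLeft k h) (Coalgebra.comul (R := k) (1 : H)) := by
  simp only [epsS, comp_apply, LinearEquiv.coe_coe, mk_apply, mulRight_apply]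
  rw [← one_mul (sliceRight _ _), mul_sliceRight_mulLeft]
  rfl

lemma comul_epsS (hH : IsWeakHopf k H S) (h : H) :
    Coalgebra.comul (R := k) (epsS k H h) =
      Coalgebra.comul (R := k) (1 : H) * ((1 : H) ⊗ₜ[k] epsS k H h) := by
  have key := congrArg (sliceRight (Coalgebra.counit ∘ₗ mulLeft k h)) hH.comul_one_left
  rwa [← rTensor, ← comp_apply, sliceRight_comp_rTensor, comp_apply, sliceRight_mul_assoc_symm,
    ← epsS_apply] at key

lemma comul_of_epsS_eq (hH : IsWeakHopf k H S) {z : H} (hz : epsS k H z = z) :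
    Coalgebra.comul (R := k) z = Coalgebra.comul (R := k) (1 : H) * ((1 : H) ⊗ₜ[k] z) := by
  simpa only [hz] using comul_epsS hH z

lemma rTensor_epsS_comul_one (hH : IsWeakHopf k H S) :
    rTensor H (epsS k H) (Coalgebra.comul (R := k) (1 : H)) =
      Coalgebra.comul (R := k) (1 : H) := by
  have hleft : rTensor H (sliceRight Coalgebra.counit)
      (rTensor H Coalgebra.comul (Coalgebra.comul (R := k) (1 : H))) =
        Coalgebra.comul (R := k) (1 : H) := by
    rw [← comp_apply, ← rTensor_comp, sliceRight_counit_comp_comul, rTensor_id, id_apply]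
  have hright : ∀ u : H ⊗[k] H, rTensor H (sliceRight Coalgebra.counit)
      ((TensorProduct.assoc k H H H).symm ((1 : H) ⊗ₜ[k] u) *
        (Coalgebra.comul (R := k) (1 : H) ⊗ₜ[k] (1 : H))) = rTensor H (epsS k H) u := by
    intro u
    induction u with
    | zero => simp
    | tmul c d => rw [rTensor_sliceRight_assoc_symm_mul, rTensor_tmul, epsS_apply]
    | add x y hx hy => rw [TensorProduct.tmul_add, map_add, add_mul, map_add, hx, hy, map_add]
  rw [← hright, ← hH.comul_one_right]
  exact hleft

lemma epsS_epsS (hH : IsWeakHopf k H S) (h : H) : epsS k H (epsS k H h) = epsS k H h := by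
  have key :=
    congrArg (sliceRight (Coalgebra.counit ∘ₗ mulLeft k h)) (rTensor_epsS_comul_one hH)
  rwa [← comp_apply, sliceRight_comp_rTensor, comp_apply, ← epsS_apply] at key

lemma conv_id_epsS (hH : IsWeakHopf k H S) : conv k LinearMap.id (epsS k H) = LinearMap.id := by
  ext h
  have hmul : ∀ t : H ⊗[k] H, LinearMap.mul' k H (lTensor H (epsS k H) t) =
      sliceRight Coalgebra.counit (t * Coalgebra.comul (R := k) (1 : H)) := by
    intro t
    induction t with
    | zero => simp
    | tmul a b => simp [epsS_apply, mul_sliceRight_mulLeft]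
    | add x y hx hy => rw [map_add, map_add, hx, hy, add_mul, map_add]
  rw [conv, comp_apply, comp_apply, ← lTensor, hmul, ← hH.comul_mul, mul_one,
    ← comp_apply, sliceRight_counit_comp_comul, id_apply]

lemma epsS_mul_of_epsS_eq (hH : IsWeakHopf k H S) {z : H} (hz : epsS k H z = z) (w : H) :
    epsS k H (w * z) = epsS k H w * z := by
  have hepsS : ∀ h, epsS k H h = LinearMap.mul' k H (rTensor H S (Coalgebra.comul (R := k) h)) :=
    fun h => (LinearMap.congr_fun hH.conv_antipode_id h).symm
  have hmul : ∀ t : H ⊗[k] H, LinearMap.mul' k H (rTensor H S (t * ((1 : H) ⊗ₜ[k] z))) =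
      LinearMap.mul' k H (rTensor H S t) * z := by
    intro t
    induction t with
    | zero => simp
    | tmul a b => simp [Algebra.TensorProduct.tmul_mul_tmul, mul_assoc]
    | add x y hx hy => rw [add_mul, map_add, map_add, map_add, map_add, hx, hy, add_mul]
  rw [hepsS, hepsS, hH.comul_mul, comul_of_epsS_eq hH hz, ← mul_assoc, ← hH.comul_mul, mul_one,
    hmul]

end WeakHopf

section Statement

variable (k : Type*) [Field k] (H : Type*) [Ring H] [Algebra k H] [Coalgebra k H]
  [FiniteDimensional k H]

/-- Proposition 4.1: a weak Hopf algebra `H` is quantum commutative, i.e.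
`h₁ g ε_s(h₂) = h g` for all `g, h ∈ H`, if and only if the source counital
subalgebra `H_s` is contained in the center of `H`. -/
theorem quantum_commutative_iff (S : H →ₗ[k] H) (hH : IsWeakHopf k H S) :
    (∀ h g : H, smul3 k H LinearMap.id (epsS k H) g h = h * g) ↔
      (∀ x : H, epsS k H x = x → x ∈ Set.center H) := by
  constructor
  · intro hqc x hx
    refine Semigroup.mem_center_iff.mpr fun g => ?_
    calc g * x = smul3 k H LinearMap.id (epsS k H) g 1 * x := by rw [hqc, one_mul]
      _ = smul3 k H LinearMap.id (epsS k H) g x :=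
        (smul3_apply_of_comul_eq (epsS_mul_of_epsS_eq hH hx) (comul_of_epsS_eq hH hx)).symm
      _ = x * g := hqc x g
  · intro hc h g
    have hcomm : ∀ y, Commute (epsS k H y) g := fun y =>
      (Semigroup.mem_center_iff.mp (hc _ (epsS_epsS hH y)) g).symm
    rw [smul3_eq_mulRight_comp_conv hcomm, conv_id_epsS hH, comp_id, mulRight_apply]

end Statement
end
end
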